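/- ∫_{-1}^{1} ∫_{-1}^{1} Φ(x)Φ(y)/(1 + x²y²) dx dy = G, where Φ(x) = (1/√(2π)) ∫_{-∞}^{x} e^{-t²/2} dt is the standard normal cumulative distribution function and G is Catalan's constant. -/

import Mathlib

noncomputable def stdNormalCDF (x : ℝ) : ℝ :=
  (1 / Real.sqrt (2 * Real.pi)) * ∫ t in Set.Iic x, Real.exp (-t^2 / 2)

/-!
Since `Φ(x) + Φ(-x) = 1` and the kernel `1 / (1 + x²y²)` is even in each variable, pairing `x`
with `-x` and then `y` with `-y` replaces both factors `Φ` by `1/2`. What remains is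
`∫₀¹ ∫₀¹ dx dy / (1 + x²y²) = ∫₀¹ arctan y / y dy`, and integrating the Taylor series
`arctan y / y = ∑ (-1)ⁿ y²ⁿ / (2n + 1)` term by term gives `∑ (-1)ⁿ / (2n + 1)² = G`.
-/

open Real MeasureTheory Set intervalIntegral

lemma integrable_exp_neg_sq_div_two : Integrable fun t : ℝ => exp (-t ^ 2 / 2) := by
  convert integrable_exp_neg_mul_sq (b := 2⁻¹) (by norm_num) using 3
  ring

lemma integral_exp_neg_sq_div_two : ∫ t : ℝ, exp (-t ^ 2 / 2) = √(2 * π) := by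
  convert integral_gaussian (2⁻¹ : ℝ) using 3 with t
  · ring_nf
  · ring

lemma stdNormalCDF_add_stdNormalCDF_neg (x : ℝ) : stdNormalCDF x + stdNormalCDF (-x) = 1 := by
  have h_reflect : ∫ t in Iic (-x), exp (-t ^ 2 / 2) = ∫ t in Ioi x, exp (-t ^ 2 / 2) := by
    have h := integral_comp_neg_Iic (-x) fun t => exp (-t ^ 2 / 2)
    simp only [neg_neg, neg_sq] at h
    exact h
  have h_split :
      (∫ t in Iic x, exp (-t ^ 2 / 2)) + ∫ t in Ioi x, exp (-t ^ 2 / 2) = √(2 * π) := by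
    rw [← integral_exp_neg_sq_div_two, ← compl_Iic,
      integral_add_compl measurableSet_Iic integrable_exp_neg_sq_div_two]
  have : 0 < √(2 * π) := by positivity
  rw [stdNormalCDF, stdNormalCDF, h_reflect, ← mul_add, h_split]
  field_simp

lemma continuous_stdNormalCDF : Continuous stdNormalCDF := by
  have h_primitive (x : ℝ) : ∫ t in Iic x, exp (-t ^ 2 / 2)
      = (∫ t in Iic 0, exp (-t ^ 2 / 2)) + ∫ t in (0 : ℝ)..x, exp (-t ^ 2 / 2) := by
    rw [← integral_Iic_sub_Iic integrable_exp_neg_sq_div_two.integrableOn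
      integrable_exp_neg_sq_div_two.integrableOn]
    ring
  unfold stdNormalCDF
  exact continuous_const.mul <| (continuous_const.add
    (integrable_exp_neg_sq_div_two.continuous_primitive 0)).congr fun x => (h_primitive x).symm

lemma integral_neg_self_eq_two_mul_of_even {f : ℝ → ℝ} (hf : f.Even) {a : ℝ}
    (hint : IntervalIntegrable f volume (-a) a) :
    ∫ x in -a..a, f x = 2 * ∫ x in (0 : ℝ)..a, f x := by
  have h_zero : (0 : ℝ) ∈ uIcc (-a) a := by
    rcases le_total 0 a with h | h <;> simp [h]
  have h_left : ∫ x in -a..0, f x = ∫ x in (0 : ℝ)..a, f x := by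
    simpa only [hf _, neg_zero] using (integral_comp_neg (a := 0) (b := a) f).symm
  rw [← integral_add_adjacent_intervals
    (hint.mono_set (uIcc_subset_uIcc_left h_zero))
    (hint.mono_set (uIcc_subset_uIcc_right h_zero)), h_left, two_mul]

lemma integral_stdNormalCDF_mul_of_even {h : ℝ → ℝ} (hh : h.Even) {a : ℝ}
    (hint : IntervalIntegrable h volume (-a) a) :
    ∫ x in -a..a, stdNormalCDF x * h x = ∫ x in (0 : ℝ)..a, h x := by
  have h_reflect :
      ∫ x in -a..a, stdNormalCDF x * h x = ∫ x in -a..a, stdNormalCDF (-x) * h x := by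
    simpa only [hh _, neg_neg] using (integral_comp_neg (a := -a) (b := a)
      fun x => stdNormalCDF x * h x).symm
  have h_sum : (∫ x in -a..a, stdNormalCDF x * h x) + ∫ x in -a..a, stdNormalCDF (-x) * h x
      = ∫ x in -a..a, h x := by
    have h_cont_neg : Continuous fun x => stdNormalCDF (-x) :=
      continuous_stdNormalCDF.comp continuous_neg
    rw [← integral_add (hint.continuousOn_mul continuous_stdNormalCDF.continuousOn)
      (hint.continuousOn_mul h_cont_neg.continuousOn)]
    simp only [← add_mul, stdNormalCDF_add_stdNormalCDF_neg, one_mul]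
  linarith [integral_neg_self_eq_two_mul_of_even hh hint]

lemma integral_one_div_one_add_sq_mul_sq {y : ℝ} (hy : y ≠ 0) (a b : ℝ) :
    ∫ x in a..b, 1 / (1 + x ^ 2 * y ^ 2) = (arctan (b * y) - arctan (a * y)) / y := by
  simp only [← mul_pow]
  rw [integral_comp_mul_right (fun u => 1 / (1 + u ^ 2)) hy, integral_one_div_one_add_sq,
    smul_eq_mul, inv_mul_eq_div]

lemma hasSum_arctan_div_self {y : ℝ} (hy₀ : y ≠ 0) (hy : |y| < 1) :
    HasSum (fun n : ℕ => (-1) ^ n * y ^ (2 * n) / (2 * n + 1)) (arctan y / y) := by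
  refine ((Real.hasSum_arctan (by rwa [Real.norm_eq_abs])).div_const y).congr_fun fun n => ?_
  push_cast
  field_simp
  ring

lemma summable_one_div_two_mul_add_one_sq :
    Summable fun n : ℕ => 1 / (2 * (n : ℝ) + 1) ^ 2 := by
  have h := ((Real.summable_one_div_nat_pow (p := 2)).mpr one_lt_two).comp_injective
    (i := fun n : ℕ => 2 * n + 1) (fun m n h => by simpa using h)
  simpa [Function.comp_def] using h

lemma integral_Ioc_zero_one_pow (m : ℕ) : ∫ y in Ioc (0 : ℝ) 1, y ^ m = 1 / (m + 1) := by
  rw [← integral_of_le zero_le_one, integral_pow]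
  norm_num

lemma integral_arctan_div_self :
    ∫ y in (0 : ℝ)..1, arctan y / y = ∑' n : ℕ, (-1 : ℝ) ^ n / (2 * n + 1) ^ 2 := by
  set F : ℕ → ℝ → ℝ := fun n y => (-1) ^ n * y ^ (2 * n) / (2 * n + 1) with hF
  have h_series : ∀ᵐ y, y ∈ uIoc (0 : ℝ) 1 → arctan y / y = ∑' n, F n y := by
    filter_upwards [Measure.ae_ne volume 1] with y hy₁ hy
    rw [uIoc_of_le zero_le_one] at hy
    have h_abs : |y| < 1 := abs_lt.mpr ⟨by linarith [hy.1], lt_of_le_of_ne hy.2 hy₁⟩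
    exact (hasSum_arctan_div_self hy.1.ne' h_abs).tsum_eq.symm
  have h_int (n : ℕ) : Integrable (F n) (volume.restrict (Ioc 0 1)) :=
    (by fun_prop : Continuous (F n)).integrableOn_Ioc
  have h_norm (n : ℕ) : (fun y => ‖F n y‖) = fun y : ℝ => y ^ (2 * n) / (2 * n + 1) := by
    ext y
    rw [hF, Real.norm_eq_abs, abs_div, abs_mul, abs_pow, abs_pow, abs_neg, abs_one, one_pow,
      one_mul, (even_two_mul n).pow_abs, abs_of_pos (by positivity)]
  have h_summable : Summable fun n => ∫ y in Ioc (0 : ℝ) 1, ‖F n y‖ := by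
    refine summable_one_div_two_mul_add_one_sq.congr fun n => ?_
    rw [h_norm, MeasureTheory.integral_div, integral_Ioc_zero_one_pow]
    push_cast
    field_simp
  rw [integral_congr_ae h_series, integral_of_le zero_le_one,
    ← integral_tsum_of_summable_integral_norm h_int h_summable]
  congr 1 with n
  simp only [hF, MeasureTheory.integral_div, MeasureTheory.integral_const_mul,
    integral_Ioc_zero_one_pow]
  push_cast
  field_simp

theorem catalan_normal_cdf :
    ∫ y in (-1:ℝ)..1, ∫ x in (-1:ℝ)..1,
        stdNormalCDF x * stdNormalCDF y / (1 + x^2 * y^2)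
      = ∑' n : ℕ, (-1 : ℝ)^n / (2 * n + 1)^2 := by
  set k : ℝ → ℝ := fun y => ∫ x in (0 : ℝ)..1, 1 / (1 + x ^ 2 * y ^ 2) with hk
  have h_inner (y : ℝ) :
      ∫ x in (-1 : ℝ)..1, stdNormalCDF x * stdNormalCDF y / (1 + x ^ 2 * y ^ 2)
        = stdNormalCDF y * k y := by
    have h_even : (fun x : ℝ => stdNormalCDF y / (1 + x ^ 2 * y ^ 2)).Even := fun x => by
      simp only [neg_sq]
    have h_cont : Continuous fun x : ℝ => stdNormalCDF y / (1 + x ^ 2 * y ^ 2) :=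
      continuous_const.div (by fun_prop) fun x => by positivity
    simp only [mul_div_assoc]
    rw [integral_stdNormalCDF_mul_of_even h_even (h_cont.intervalIntegrable _ _), hk,
      ← intervalIntegral.integral_const_mul]
    simp only [mul_one_div]
  have hk_cont : Continuous k := continuous_parametric_intervalIntegral_of_continuous'
    (continuous_const.div (by fun_prop) fun p => by positivity) 0 1
  have hk_even : k.Even := fun y => by simp only [hk, neg_sq]
  have hk_arctan : ∀ y ∈ uIoc (0 : ℝ) 1, k y = arctan y / y := fun y hy => by
    rw [uIoc_of_le zero_le_one] at hy
    simpa [hk] using integral_one_div_one_add_sq_mul_sq hy.1.ne' 0 1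
  calc _ = ∫ y in (-1 : ℝ)..1, stdNormalCDF y * k y := by simp only [h_inner]
    _ = ∫ y in (0 : ℝ)..1, k y :=
      integral_stdNormalCDF_mul_of_even hk_even (hk_cont.intervalIntegrable _ _)
    _ = ∫ y in (0 : ℝ)..1, arctan y / y := integral_congr_ae (.of_forall hk_arctan)
    _ = _ := integral_arctan_div_self
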